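/- Let I ⊆ ℝ be an open interval, g > 0, and let h, u, α₁, α₂, b : I → ℝ be differentiable with h(x) > 0 and u(x) ≠ 0 for all x ∈ I. Then the frictionless steady SWLME2 equations hold on I — namely (h u)′ = 0, (h u^2 + g h^2/2 + (1/3) h α₁^2 + (1/5) h α₂^2)′ + g h b′ = 0, and (2 h u α_i)′ = u (h α_i)′ for i = 1, 2 — if and only if the four functions h u, (1/2) u^2 + g (h + b) + (1/2) α₁^2 + (3/10) α₂^2, α₁/h, and α₂/h are constant on I. -/

import Mathlib

/-!
Under the mass equation `(h u)' = 0`, the moment equation for `αᵢ` differs from its residual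
form `u h² (αᵢ / h)' = 0` only by `2 αᵢ (h u)'`, and the momentum equation differs from
`h · (total head)' = 0` only by multiples of `(h u)'` and of the `(αᵢ / h)'`. Since `u ≠ 0`
and `h ≠ 0`, the four steady equations are therefore pointwise equivalent to the vanishing
of the derivatives of the four invariants, and on an open interval that is their constancy.
-/

theorem IsOpen.exists_eq_const_iff_deriv_eq_zero {𝕜 G : Type*} [RCLike 𝕜]
    [NormedAddCommGroup G] [NormedSpace 𝕜 G] {s : Set 𝕜} {f : 𝕜 → G}
    (hs : IsOpen s) (hs' : IsPreconnected s) (hf : DifferentiableOn 𝕜 f s) :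
    (∃ c, ∀ x ∈ s, f x = c) ↔ ∀ x ∈ s, deriv f x = 0 := by
  refine ⟨fun ⟨c, hc⟩ x hx => ?_, hs.exists_is_const_of_deriv_eq_zero hs' hf⟩
  have hfc : f =ᶠ[nhds x] fun _ => c := Filter.eventuallyEq_of_mem (hs.mem_nhds hx) hc
  rw [hfc.deriv_eq, deriv_const]

namespace SWLME2

variable (g : ℝ) (h u α₁ α₂ b : ℝ → ℝ)

noncomputable def totalHead : ℝ → ℝ := fun y =>
  (1 / 2) * u y ^ 2 + g * (h y + b y) + (1 / 2) * α₁ y ^ 2 + (3 / 10) * α₂ y ^ 2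

variable {g h u α₁ α₂ b}

theorem deriv_moment_flux {α : ℝ → ℝ} {x : ℝ} (hh : DifferentiableAt ℝ h x)
    (hu : DifferentiableAt ℝ u x) (hα : DifferentiableAt ℝ α x) (hx : h x ≠ 0) :
    deriv (fun y => 2 * h y * u y * α y) x
      = u x * deriv (fun y => h y * α y) x + 2 * α x * deriv (fun y => h y * u y) x
        + u x * h x ^ 2 * deriv (fun y => α y / h y) x := by
  have Hh := hh.hasDerivAt; have Hu := hu.hasDerivAt; have Hα := hα.hasDerivAt
  rw [(((Hh.const_mul 2).fun_mul Hu).fun_mul Hα).deriv, (Hh.fun_mul Hα).deriv,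
    (Hh.fun_mul Hu).deriv, (Hα.fun_div Hh hx).deriv]
  field_simp
  ring

theorem deriv_momentum_flux_add {x : ℝ} (hh : DifferentiableAt ℝ h x)
    (hu : DifferentiableAt ℝ u x) (hα₁ : DifferentiableAt ℝ α₁ x)
    (hα₂ : DifferentiableAt ℝ α₂ x) (hb : DifferentiableAt ℝ b x) (hx : h x ≠ 0) :
    deriv (fun y => h y * u y ^ 2 + g * h y ^ 2 / 2
        + (1 / 3) * h y * α₁ y ^ 2 + (1 / 5) * h y * α₂ y ^ 2) x + g * h x * deriv b x
      = h x * deriv (totalHead g h u α₁ α₂ b) x + u x * deriv (fun y => h y * u y) x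
        - (1 / 3) * α₁ x * h x ^ 2 * deriv (fun y => α₁ y / h y) x
        - (1 / 5) * α₂ x * h x ^ 2 * deriv (fun y => α₂ y / h y) x := by
  have Hh := hh.hasDerivAt; have Hu := hu.hasDerivAt; have Hb := hb.hasDerivAt
  have Hα₁ := hα₁.hasDerivAt; have Hα₂ := hα₂.hasDerivAt
  have Hflux := (((Hh.fun_mul (Hu.fun_pow 2)).fun_add
    (((Hh.fun_pow 2).const_mul g).div_const 2)).fun_add
    ((Hh.const_mul (1 / 3)).fun_mul (Hα₁.fun_pow 2))).fun_add
    ((Hh.const_mul (1 / 5)).fun_mul (Hα₂.fun_pow 2))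
  have Hhead := ((((Hu.fun_pow 2).const_mul (1 / 2)).fun_add
    ((Hh.fun_add Hb).const_mul g)).fun_add
    ((Hα₁.fun_pow 2).const_mul (1 / 2))).fun_add ((Hα₂.fun_pow 2).const_mul (3 / 10))
  unfold totalHead
  rw [Hflux.deriv, Hhead.deriv, (Hh.fun_mul Hu).deriv, (Hα₁.fun_div Hh hx).deriv,
    (Hα₂.fun_div Hh hx).deriv]
  field_simp
  ring

theorem steady_equations_iff_of_balance {H U A₁ A₂ q E s₁ s₂ F M₁ M₂ R₁ R₂ : ℝ}
    (hH : H ≠ 0) (hU : U ≠ 0)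
    (hF : F = H * E + U * q - (1 / 3) * A₁ * H ^ 2 * s₁ - (1 / 5) * A₂ * H ^ 2 * s₂)
    (hM₁ : M₁ = U * R₁ + 2 * A₁ * q + U * H ^ 2 * s₁)
    (hM₂ : M₂ = U * R₂ + 2 * A₂ * q + U * H ^ 2 * s₂) :
    (q = 0 ∧ F = 0 ∧ M₁ = U * R₁ ∧ M₂ = U * R₂) ↔ (q = 0 ∧ E = 0 ∧ s₁ = 0 ∧ s₂ = 0) := by
  subst hF hM₁ hM₂
  constructor
  · rintro ⟨rfl, hF, hM₁, hM₂⟩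
    have hs₁ : s₁ = 0 := by simpa [hU, hH] using hM₁
    have hs₂ : s₂ = 0 := by simpa [hU, hH] using hM₂
    subst hs₁ hs₂
    exact ⟨rfl, by simpa [hH] using hF, rfl, rfl⟩
  · rintro ⟨rfl, rfl, rfl, rfl⟩
    simp

end SWLME2

open SWLME2

theorem swlme2_steady_state_characterization_general
    (I : Set ℝ) (hIopen : IsOpen I) (hIconn : Convex ℝ I)
    (g : ℝ) (h u α₁ α₂ b : ℝ → ℝ)
    (hh : ∀ x ∈ I, DifferentiableAt ℝ h x)
    (hu : ∀ x ∈ I, DifferentiableAt ℝ u x)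
    (hα₁ : ∀ x ∈ I, DifferentiableAt ℝ α₁ x)
    (hα₂ : ∀ x ∈ I, DifferentiableAt ℝ α₂ x)
    (hb : ∀ x ∈ I, DifferentiableAt ℝ b x)
    (hpos : ∀ x ∈ I, 0 < h x)
    (hune : ∀ x ∈ I, u x ≠ 0) :
    ((∀ x ∈ I, deriv (fun y => h y * u y) x = 0) ∧
     (∀ x ∈ I, deriv (fun y => h y * u y ^ 2 + g * h y ^ 2 / 2
         + (1 / 3) * h y * α₁ y ^ 2 + (1 / 5) * h y * α₂ y ^ 2) x
       + g * h x * deriv b x = 0) ∧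
     (∀ x ∈ I, deriv (fun y => 2 * h y * u y * α₁ y) x
       = u x * deriv (fun y => h y * α₁ y) x) ∧
     (∀ x ∈ I, deriv (fun y => 2 * h y * u y * α₂ y) x
       = u x * deriv (fun y => h y * α₂ y) x))
    ↔
    ((∃ c₁, ∀ x ∈ I, h x * u x = c₁) ∧
     (∃ c₂, ∀ x ∈ I, (1 / 2) * u x ^ 2 + g * (h x + b x)
        + (1 / 2) * α₁ x ^ 2 + (3 / 10) * α₂ x ^ 2 = c₂) ∧
     (∃ c₃, ∀ x ∈ I, α₁ x / h x = c₃) ∧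
     (∃ c₄, ∀ x ∈ I, α₂ x / h x = c₄)) := by
  have hne : ∀ x ∈ I, h x ≠ 0 := fun x hx => (hpos x hx).ne'
  have pointwise : ∀ x ∈ I, _ ↔ (deriv (fun y => h y * u y) x = 0
      ∧ deriv (totalHead g h u α₁ α₂ b) x = 0
      ∧ deriv (fun y => α₁ y / h y) x = 0 ∧ deriv (fun y => α₂ y / h y) x = 0) :=
    fun x hx => steady_equations_iff_of_balance (hne x hx) (hune x hx)
      (deriv_momentum_flux_add (hh x hx) (hu x hx) (hα₁ x hx) (hα₂ x hx) (hb x hx) (hne x hx))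
      (deriv_moment_flux (hh x hx) (hu x hx) (hα₁ x hx) (hne x hx))
      (deriv_moment_flux (hh x hx) (hu x hx) (hα₂ x hx) (hne x hx))
  have differentiable : ∀ x ∈ I, DifferentiableAt ℝ (fun y => h y * u y) x
      ∧ DifferentiableAt ℝ (totalHead g h u α₁ α₂ b) x
      ∧ DifferentiableAt ℝ (fun y => α₁ y / h y) x
      ∧ DifferentiableAt ℝ (fun y => α₂ y / h y) x := by
    intro x hx
    have := hh x hx; have := hu x hx; have := hα₁ x hx; have := hα₂ x hx; have := hb x hx
    have := hne x hx
    unfold totalHead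
    refine ⟨?_, ?_, ?_, ?_⟩ <;> fun_prop (disch := assumption)
  have const_iff := fun (f : ℝ → ℝ) (hf : ∀ x ∈ I, DifferentiableAt ℝ f x) =>
    (hIopen.exists_eq_const_iff_deriv_eq_zero hIconn.isPreconnected
      fun x hx => (hf x hx).differentiableWithinAt).symm
  simp only [← forall₂_and]
  rw [forall₂_congr pointwise]
  simp only [forall₂_and]
  exact and_congr (const_iff _ fun x hx => (differentiable x hx).1) <|
    and_congr (const_iff _ fun x hx => (differentiable x hx).2.1) <|
    and_congr (const_iff _ fun x hx => (differentiable x hx).2.2.1)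
      (const_iff _ fun x hx => (differentiable x hx).2.2.2)

/-- Characterization of the frictionless smooth steady states of the SWLME2 model:
on an open interval with `h > 0` and `u ≠ 0`, the steady equations
`(h u)' = 0`, `(h u² + g h²/2 + (1/3) h α₁² + (1/5) h α₂²)' + g h b' = 0` and
`(2 h u αᵢ)' = u (h αᵢ)'` (i = 1,2) hold if and only if `h u`,
`(1/2) u² + g (h + b) + (1/2) α₁² + (3/10) α₂²`, `α₁/h` and `α₂/h` are constant. -/
theorem swlme2_steady_state_characterization
    (I : Set ℝ) (hIopen : IsOpen I) (hIconn : Convex ℝ I)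
    (g : ℝ) (hg : 0 < g) (h u α₁ α₂ b : ℝ → ℝ)
    (hh : ∀ x ∈ I, DifferentiableAt ℝ h x)
    (hu : ∀ x ∈ I, DifferentiableAt ℝ u x)
    (hα₁ : ∀ x ∈ I, DifferentiableAt ℝ α₁ x)
    (hα₂ : ∀ x ∈ I, DifferentiableAt ℝ α₂ x)
    (hb : ∀ x ∈ I, DifferentiableAt ℝ b x)
    (hpos : ∀ x ∈ I, 0 < h x)
    (hune : ∀ x ∈ I, u x ≠ 0) :
    ((∀ x ∈ I, deriv (fun y => h y * u y) x = 0) ∧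
     (∀ x ∈ I, deriv (fun y => h y * u y ^ 2 + g * h y ^ 2 / 2
         + (1 / 3) * h y * α₁ y ^ 2 + (1 / 5) * h y * α₂ y ^ 2) x
       + g * h x * deriv b x = 0) ∧
     (∀ x ∈ I, deriv (fun y => 2 * h y * u y * α₁ y) x
       = u x * deriv (fun y => h y * α₁ y) x) ∧
     (∀ x ∈ I, deriv (fun y => 2 * h y * u y * α₂ y) x
       = u x * deriv (fun y => h y * α₂ y) x))
    ↔
    ((∃ c₁, ∀ x ∈ I, h x * u x = c₁) ∧
     (∃ c₂, ∀ x ∈ I, (1 / 2) * u x ^ 2 + g * (h x + b x)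
        + (1 / 2) * α₁ x ^ 2 + (3 / 10) * α₂ x ^ 2 = c₂) ∧
     (∃ c₃, ∀ x ∈ I, α₁ x / h x = c₃) ∧
     (∃ c₄, ∀ x ∈ I, α₂ x / h x = c₄)) :=
  swlme2_steady_state_characterization_general I hIopen hIconn g h u α₁ α₂ b hh hu hα₁ hα₂ hb hpos
    hune
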